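/- arXiv:1706.09615 — 6 statements merged into one kernel-verified Lean document; each statement's English description precedes it below -/
import Mathlib

section
/- Let a_1 ≥ a_2 ≥ ... ≥ a_m ≥ 0 be real numbers and l ≤ m a positive integer. If ∑_{i=1}^{l} a_i ≥ ∑_{i=l+1}^{m} a_i, then for all real θ ≥ 1, ∑_{j=l+1}^{m} a_j^θ ≤ ∑_{i=1}^{l} a_i^θ. -/
theorem stmt_0 (m l : ℕ) (hl : 0 < l) (hlm : l ≤ m) (a : ℕ → ℝ)
    (hnn : ∀ i ∈ Finset.Icc 1 m, 0 ≤ a i)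
    (hmono : ∀ i j : ℕ, 1 ≤ i → i ≤ j → j ≤ m → a j ≤ a i)
    (hsum : ∑ i ∈ Finset.Icc (l + 1) m, a i ≤ ∑ i ∈ Finset.Icc 1 l, a i)
    (θ : ℝ) (hθ : 1 ≤ θ) :
    ∑ j ∈ Finset.Icc (l + 1) m, a j ^ θ ≤ ∑ i ∈ Finset.Icc 1 l, a i ^ θ := by
  have hθ0 : 0 ≤ θ - 1 := by linarith
  have hal : 0 ≤ a l := hnn l (Finset.mem_Icc.mpr ⟨hl, hlm⟩)
  have key : ∀ x : ℝ, 0 ≤ x → x ^ θ = x ^ (θ - 1) * x := by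
    intro x hx
    rcases eq_or_lt_of_le hx with h | h
    · rw [← h, Real.zero_rpow (by linarith), mul_zero]
    · rw [← Real.rpow_add_one h.ne' (θ - 1), sub_add_cancel]
  have hnn2 : ∀ j ∈ Finset.Icc (l + 1) m, 0 ≤ a j := fun j hj => by
    have := Finset.mem_Icc.mp hj
    exact hnn j (Finset.mem_Icc.mpr ⟨le_trans hl (le_trans (Nat.le_succ l) this.1), this.2⟩)
  calc ∑ j ∈ Finset.Icc (l + 1) m, a j ^ θ
      = ∑ j ∈ Finset.Icc (l + 1) m, a j ^ (θ - 1) * a j :=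
        Finset.sum_congr rfl fun j hj => key _ (hnn2 j hj)
    _ ≤ ∑ j ∈ Finset.Icc (l + 1) m, a l ^ (θ - 1) * a j := by
        refine Finset.sum_le_sum fun j hj => ?_
        have hj' := Finset.mem_Icc.mp hj
        have hjl : a j ≤ a l := hmono l j hl (le_trans (Nat.le_succ l) hj'.1) hj'.2
        exact mul_le_mul_of_nonneg_right
          (Real.rpow_le_rpow (hnn2 j hj) hjl hθ0) (hnn2 j hj)
    _ = a l ^ (θ - 1) * ∑ j ∈ Finset.Icc (l + 1) m, a j := by rw [Finset.mul_sum]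
    _ ≤ a l ^ (θ - 1) * ∑ i ∈ Finset.Icc 1 l, a i :=
        mul_le_mul_of_nonneg_left hsum (Real.rpow_nonneg hal _)
    _ = ∑ i ∈ Finset.Icc 1 l, a l ^ (θ - 1) * a i := by rw [Finset.mul_sum]
    _ ≤ ∑ i ∈ Finset.Icc 1 l, a i ^ (θ - 1) * a i := by
        refine Finset.sum_le_sum fun i hi => ?_
        have hi' := Finset.mem_Icc.mp hi
        have hil : a l ≤ a i := hmono i l hi'.1 hi'.2 hlm
        have hai : 0 ≤ a i := hnn i (Finset.mem_Icc.mpr ⟨hi'.1, le_trans hi'.2 hlm⟩)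
        exact mul_le_mul_of_nonneg_right (Real.rpow_le_rpow hal hil hθ0) hai
    _ = ∑ i ∈ Finset.Icc 1 l, a i ^ θ := by
        refine Finset.sum_congr rfl fun i hi => ?_
        have hi' := Finset.mem_Icc.mp hi
        exact (key _ (hnn i (Finset.mem_Icc.mpr ⟨hi'.1, le_trans hi'.2 hlm⟩))).symm
end

section
/- Let a_1 ≥ a_2 ≥ ... ≥ a_m ≥ 0 be reals, l ≤ m a positive integer, λ ≥ 0, and suppose ∑_{i=1}^{l} a_i + λ ≥ ∑_{i=l+1}^{m} a_i. Then for all θ ≥ 1, ∑_{j=l+1}^{m} a_j^θ ≤ l · ( ( (∑_{i=1}^{l} a_i^θ)/l )^{1/θ} + λ/l )^θ. -/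
theorem stmt_1 (m l : ℕ) (hl : 0 < l) (hlm : l ≤ m) (a : ℕ → ℝ) (lam : ℝ)
    (hnn : ∀ i ∈ Finset.Icc 1 m, 0 ≤ a i)
    (hmono : ∀ i j : ℕ, 1 ≤ i → i ≤ j → j ≤ m → a j ≤ a i)
    (hlam : 0 ≤ lam)
    (hsum : ∑ i ∈ Finset.Icc (l + 1) m, a i ≤ (∑ i ∈ Finset.Icc 1 l, a i) + lam)
    (θ : ℝ) (hθ : 1 ≤ θ) :
    ∑ j ∈ Finset.Icc (l + 1) m, a j ^ θ ≤
      (l : ℝ) * (((∑ i ∈ Finset.Icc 1 l, a i ^ θ) / l) ^ (1 / θ) + lam / l) ^ θ := by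
  set T := ∑ i ∈ Finset.Icc 1 l, a i with hT
  set Q := ∑ i ∈ Finset.Icc 1 l, a i ^ θ with hQ
  set P := (Q / l) ^ (1 / θ) with hP
  have hl0 : (0:ℝ) < l := by exact_mod_cast hl
  have hθ0 : (0:ℝ) < θ := lt_of_lt_of_le one_pos hθ
  have hnn1 : ∀ i ∈ Finset.Icc 1 l, 0 ≤ a i := fun i hi => hnn i (by
    simp only [Finset.mem_Icc] at *; omega)
  have hnn2 : ∀ j ∈ Finset.Icc (l+1) m, 0 ≤ a j := fun j hj => hnn j (by
    simp only [Finset.mem_Icc] at *; omega)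
  have hQnn : 0 ≤ Q := Finset.sum_nonneg (fun i hi => Real.rpow_nonneg (hnn1 i hi) θ)
  have hPnn : 0 ≤ P := Real.rpow_nonneg (by positivity) _
  set M := P + lam / l with hM
  have hMnn : 0 ≤ M := by positivity
  -- power mean inequality : T ≤ l * P
  have hTP : T ≤ (l:ℝ) * P := by
    have h := Real.arith_mean_le_rpow_mean (Finset.Icc 1 l) (fun _ => 1/(l:ℝ)) a
      (fun i _ => by positivity) (by
        rw [Finset.sum_const, Nat.card_Icc]
        simp
        field_simp) hnn1 hθ
    rw [← Finset.mul_sum, ← Finset.mul_sum] at h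
    have : (1/(l:ℝ)) * T ≤ ((1/(l:ℝ)) * Q) ^ (1/θ) := h
    rw [one_div, inv_mul_eq_div, inv_mul_eq_div, ← hP] at this
    calc T = (l:ℝ) * (T / l) := by field_simp
    _ ≤ (l:ℝ) * P := by
      apply mul_le_mul_of_nonneg_left _ hl0.le
      exact this
  -- each a j ≤ M for j > l
  have hkey : ∀ j ∈ Finset.Icc (l+1) m, a j ≤ M := by
    intro j hj
    simp only [Finset.mem_Icc] at hj
    have h1 : a j ≤ a l := hmono l j hl (by omega) hj.2
    have h2 : (l:ℝ) * a l ^ θ ≤ Q := by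
      have : ∀ i ∈ Finset.Icc 1 l, a l ^ θ ≤ a i ^ θ := by
        intro i hi
        simp only [Finset.mem_Icc] at hi
        exact Real.rpow_le_rpow (hnn l (by simp only [Finset.mem_Icc]; omega))
          (hmono i l hi.1 hi.2 hlm) hθ0.le
      calc (l:ℝ) * a l ^ θ = ∑ _i ∈ Finset.Icc 1 l, a l ^ θ := by
            rw [Finset.sum_const, Nat.card_Icc]; simp [nsmul_eq_mul]
      _ ≤ Q := Finset.sum_le_sum this
    have hal : 0 ≤ a l := hnn l (by simp only [Finset.mem_Icc]; omega)
    have h3 : a l ^ θ ≤ Q / l := by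
      rw [le_div_iff₀ hl0]; linarith [h2]
    have h4 : a l ≤ P := by
      have := Real.rpow_le_rpow (Real.rpow_nonneg hal θ) h3 (by positivity : (0:ℝ) ≤ 1/θ)
      rwa [one_div, Real.rpow_rpow_inv hal hθ0.ne', ← one_div] at this
    have h5 : 0 ≤ lam / (l:ℝ) := by positivity
    calc a j ≤ a l := h1
    _ ≤ P := h4
    _ ≤ M := by rw [hM]; linarith
  -- main estimate
  have hsplit : ∀ j ∈ Finset.Icc (l+1) m, a j ^ θ ≤ M ^ (θ - 1) * a j := by
    intro j hj
    have haj := hnn2 j hj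
    have heq : a j ^ θ = a j ^ (θ - 1) * a j := by
      calc a j ^ θ = a j ^ ((θ - 1) + 1) := by norm_num
      _ = a j ^ (θ - 1) * a j ^ (1:ℝ) := Real.rpow_add' haj (by simp; linarith)
      _ = a j ^ (θ - 1) * a j := by rw [Real.rpow_one]
    rw [heq]
    apply mul_le_mul_of_nonneg_right _ haj
    exact Real.rpow_le_rpow haj (hkey j hj) (by linarith)
  calc ∑ j ∈ Finset.Icc (l+1) m, a j ^ θ
      ≤ ∑ j ∈ Finset.Icc (l+1) m, M ^ (θ - 1) * a j := Finset.sum_le_sum hsplit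
    _ = M ^ (θ - 1) * ∑ j ∈ Finset.Icc (l+1) m, a j := by rw [Finset.mul_sum]
    _ ≤ M ^ (θ - 1) * (T + lam) := by
        apply mul_le_mul_of_nonneg_left hsum (Real.rpow_nonneg hMnn _)
    _ ≤ M ^ (θ - 1) * ((l:ℝ) * M) := by
        apply mul_le_mul_of_nonneg_left _ (Real.rpow_nonneg hMnn _)
        rw [hM, mul_add]
        have : (l:ℝ) * (lam / l) = lam := by field_simp
        rw [this]
        linarith
    _ = (l:ℝ) * (M ^ (θ - 1) * M ^ (1:ℝ)) := by rw [Real.rpow_one]; ring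
    _ = (l:ℝ) * M ^ θ := by
        rw [← Real.rpow_add' hMnn (by simp; linarith)]
        norm_num
end

section
/- Let v ∈ ℝ^N be a block vector over blocks 𝓘 = {d_1,...,d_M} with block-ℓ∞ norm ‖v‖_{2,∞} := max_i ‖v[i]‖_2 ≤ β and block-ℓ1 norm ‖v‖_{2,1} := ∑_i ‖v[i]‖_2 ≤ sβ for a positive real β and positive integer s. Then v can be written as a convex combination v = ∑_{i=1}^{J} λ_i u_i where each u_i satisfies: the block support of u_i is contained in that of v, u_i is block s-sparse, ‖u_i‖_{2,1} = ‖v‖_{2,1}, and ‖u_i‖_{2,∞} ≤ β. -/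
open Finset

/-- The ℓ2 norm of the `i`-th block of `v`, for the block structure given by the
block-assignment map `b : Fin N → Fin M`. -/
noncomputable def blkNorm {N M : ℕ} (b : Fin N → Fin M) (v : Fin N → ℝ) (i : Fin M) : ℝ :=
  Real.sqrt (∑ j ∈ Finset.univ.filter (fun j => b j = i), v j ^ 2)

/-- The block support of `v`: the set of blocks containing a nonzero entry. -/
noncomputable def blkSupp {N M : ℕ} (b : Fin N → Fin M) (v : Fin N → ℝ) : Finset (Fin M) :=
  Finset.univ.filter (fun i => ∃ j, b j = i ∧ v j ≠ 0)

lemma blkNorm_nonneg {N M : ℕ} (b : Fin N → Fin M) (v : Fin N → ℝ) (i : Fin M) :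
    0 ≤ blkNorm b v i := Real.sqrt_nonneg _

lemma blkNorm_eq_zero_iff {N M : ℕ} (b : Fin N → Fin M) (v : Fin N → ℝ) (i : Fin M) :
    blkNorm b v i = 0 ↔ ∀ j, b j = i → v j = 0 := by
  unfold blkNorm
  rw [Real.sqrt_eq_zero']
  constructor
  · intro h j hj
    have hnn : ∀ j ∈ univ.filter (fun j => b j = i), (0:ℝ) ≤ v j ^ 2 := fun j _ => sq_nonneg _
    have h0 : ∑ j ∈ univ.filter (fun j => b j = i), v j ^ 2 = 0 :=
      le_antisymm h (Finset.sum_nonneg hnn)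
    have := (Finset.sum_eq_zero_iff_of_nonneg hnn).1 h0 j (by simp [hj])
    exact pow_eq_zero_iff (two_ne_zero) |>.1 this
  · intro h
    apply le_of_eq
    apply Finset.sum_eq_zero
    intro j hj
    simp only [mem_filter] at hj
    rw [h j hj.2]; ring

lemma mem_blkSupp_iff {N M : ℕ} (b : Fin N → Fin M) (v : Fin N → ℝ) (i : Fin M) :
    i ∈ blkSupp b v ↔ blkNorm b v i ≠ 0 := by
  rw [blkSupp, mem_filter, Ne, blkNorm_eq_zero_iff]
  simp only [mem_univ, true_and]
  push_neg
  rfl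

/-- The target set of "good" vectors for the scalar decomposition lemma. -/
def GoodSet (M s : ℕ) (β : ℝ) (a : Fin M → ℝ) : Set (Fin M → ℝ) :=
  {c | (∀ i, 0 ≤ c i) ∧ (∀ i, c i ≤ β) ∧ (∀ i, c i ≠ 0 → a i ≠ 0) ∧
    (univ.filter (fun i => c i ≠ 0)).card ≤ s ∧ ∑ i, c i = ∑ i, a i}

lemma GoodSet_mono {M s : ℕ} {β : ℝ} {a a' : Fin M → ℝ}
    (hsupp : ∀ i, a' i ≠ 0 → a i ≠ 0) (hsum : ∑ i, a' i = ∑ i, a i) :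
    GoodSet M s β a' ⊆ GoodSet M s β a := by
  rintro c ⟨h0, hb, hsp, hcard, hsc⟩
  exact ⟨h0, hb, fun i hi => hsupp i (hsp i hi), hcard, hsc.trans hsum⟩

lemma good_base {M s : ℕ} {β : ℝ} (hβ : 0 < β) (a : Fin M → ℝ)
    (h0 : ∀ i, 0 ≤ a i) (hb : ∀ i, a i ≤ β) (hsum : ∑ i, a i ≤ s * β)
    (hfrac : (univ.filter (fun i => 0 < a i ∧ a i < β)).card ≤ 1) :
    a ∈ GoodSet M s β a := by
  refine ⟨h0, hb, fun i hi => hi, ?_, rfl⟩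
  set F := univ.filter (fun i : Fin M => 0 < a i ∧ a i < β) with hF
  set B := univ.filter (fun i : Fin M => a i = β) with hB
  have hsub : univ.filter (fun i => a i ≠ 0) ⊆ F ∪ B := by
    intro i hi
    simp only [mem_filter, mem_univ, true_and] at hi
    rcases lt_or_eq_of_le (hb i) with h | h
    · apply mem_union_left
      simp only [hF, mem_filter, mem_univ, true_and]
      exact ⟨lt_of_le_of_ne (h0 i) (Ne.symm hi), h⟩
    · apply mem_union_right
      simp only [hB, mem_filter, mem_univ, true_and]
      exact h
  have hBsum : ∑ i ∈ B, a i = B.card * β := by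
    rw [Finset.sum_congr rfl (fun i hi => (mem_filter.1 hi).2)]
    rw [Finset.sum_const, nsmul_eq_mul]
  rcases F.eq_empty_or_nonempty with hFe | ⟨i0, hi0⟩
  · have hBle : (B.card : ℝ) * β ≤ s * β := by
      rw [← hBsum]
      exact le_trans (Finset.sum_le_sum_of_subset_of_nonneg (subset_univ B)
        (fun i _ _ => h0 i)) hsum
    have hcB : B.card ≤ s := by
      have := le_of_mul_le_mul_right hBle hβ
      exact_mod_cast this
    calc (univ.filter (fun i => a i ≠ 0)).card ≤ (F ∪ B).card := card_le_card hsub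
      _ ≤ F.card + B.card := card_union_le _ _
      _ ≤ s := by rw [hFe]; simpa using hcB
  · have hi0F : 0 < a i0 ∧ a i0 < β := by
      have := mem_filter.1 hi0; exact this.2
    have hi0B : i0 ∉ B := by
      simp only [hB, mem_filter, mem_univ, true_and]
      exact ne_of_lt hi0F.2
    have hins : a i0 + (B.card : ℝ) * β ≤ s * β := by
      rw [← hBsum, ← Finset.sum_insert hi0B]
      exact le_trans (Finset.sum_le_sum_of_subset_of_nonneg (subset_univ _)
        (fun i _ _ => h0 i)) hsum
    have hlt : (B.card : ℝ) * β < (s : ℝ) * β := by linarith [hi0F.1]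
    have hcB : B.card < s := by
      have := lt_of_mul_lt_mul_right hlt (le_of_lt hβ)
      exact_mod_cast this
    calc (univ.filter (fun i => a i ≠ 0)).card ≤ (F ∪ B).card := card_le_card hsub
      _ ≤ F.card + B.card := card_union_le _ _
      _ ≤ s := by omega

lemma sum_update2 {M : ℕ} (a : Fin M → ℝ) {i j : Fin M} (hij : i ≠ j) (x y : ℝ)
    (hxy : x + y = a i + a j) :
    ∑ k, (fun k => if k = i then x else if k = j then y else a k) k = ∑ k, a k := by
  rw [← Finset.sum_compl_add_sum ({i, j} : Finset (Fin M)),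
      ← Finset.sum_compl_add_sum ({i, j} : Finset (Fin M)) a]
  congr 1
  · apply Finset.sum_congr rfl
    intro k hk
    simp only [mem_compl, mem_insert, mem_singleton, not_or] at hk
    simp [hk.1, hk.2]
  · rw [Finset.sum_pair hij, Finset.sum_pair hij]
    simpa [Ne.symm hij] using hxy

lemma scalar_decomp {M s : ℕ} (hs : 0 < s) {β : ℝ} (hβ : 0 < β) :
    ∀ (n : ℕ) (a : Fin M → ℝ),
      (univ.filter (fun i => 0 < a i ∧ a i < β)).card ≤ n →
      (∀ i, 0 ≤ a i) → (∀ i, a i ≤ β) → (∑ i, a i ≤ s * β) →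
      a ∈ convexHull ℝ (GoodSet M s β a) := by
  intro n
  induction n with
  | zero =>
    intro a hn h0 hb hsum
    exact subset_convexHull ℝ _ (good_base hβ a h0 hb hsum (by omega))
  | succ n IH =>
    intro a hn h0 hb hsum
    rcases le_or_gt (univ.filter (fun i => 0 < a i ∧ a i < β)).card 1 with hle | hgt
    · exact subset_convexHull ℝ _ (good_base hβ a h0 hb hsum hle)
    obtain ⟨i, hiF, j, hjF, hij⟩ := Finset.one_lt_card.1 hgt
    simp only [mem_filter, mem_univ, true_and] at hiF hjF
    set δ1 := min (a i) (β - a j) with hδ1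
    set δ2 := min (β - a i) (a j) with hδ2
    have hδ1pos : 0 < δ1 := lt_min hiF.1 (by linarith [hjF.2])
    have hδ2pos : 0 < δ2 := lt_min (by linarith [hiF.2]) hjF.1
    have hδ1i : δ1 ≤ a i := min_le_left _ _
    have hδ1j : δ1 ≤ β - a j := min_le_right _ _
    have hδ2i : δ2 ≤ β - a i := min_le_left _ _
    have hδ2j : δ2 ≤ a j := min_le_right _ _
    set bb : Fin M → ℝ := fun k => if k = i then a i - δ1 else if k = j then a j + δ1 else a k
      with hbb
    set cc : Fin M → ℝ := fun k => if k = i then a i + δ2 else if k = j then a j - δ2 else a k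
      with hcc
    have hbbi : bb i = a i - δ1 := by simp [hbb]
    have hbbj : bb j = a j + δ1 := by simp [hbb, Ne.symm hij]
    have hcci : cc i = a i + δ2 := by simp [hcc]
    have hccj : cc j = a j - δ2 := by simp [hcc, Ne.symm hij]
    have hbbo : ∀ k, k ≠ i → k ≠ j → bb k = a k := by intro k h1 h2; simp [hbb, h1, h2]
    have hcco : ∀ k, k ≠ i → k ≠ j → cc k = a k := by intro k h1 h2; simp [hcc, h1, h2]
    -- basic bounds
    have hb0 : ∀ k, 0 ≤ bb k := by
      intro k
      by_cases h1 : k = i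
      · rw [h1]; rw [hbbi]; linarith
      by_cases h2 : k = j
      · rw [h2]; rw [hbbj]; linarith [h0 j]
      · rw [hbbo k h1 h2]; exact h0 k
    have hbβ : ∀ k, bb k ≤ β := by
      intro k
      by_cases h1 : k = i
      · rw [h1]; rw [hbbi]; linarith [hb i]
      by_cases h2 : k = j
      · rw [h2]; rw [hbbj]; linarith
      · rw [hbbo k h1 h2]; exact hb k
    have hc0 : ∀ k, 0 ≤ cc k := by
      intro k
      by_cases h1 : k = i
      · rw [h1]; rw [hcci]; linarith [h0 i]
      by_cases h2 : k = j
      · rw [h2]; rw [hccj]; linarith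
      · rw [hcco k h1 h2]; exact h0 k
    have hcβ : ∀ k, cc k ≤ β := by
      intro k
      by_cases h1 : k = i
      · rw [h1]; rw [hcci]; linarith
      by_cases h2 : k = j
      · rw [h2]; rw [hccj]; linarith [hb j]
      · rw [hcco k h1 h2]; exact hb k
    -- sums preserved
    have hsumb : ∑ k, bb k = ∑ k, a k := sum_update2 a hij _ _ (by ring)
    have hsumc : ∑ k, cc k = ∑ k, a k := sum_update2 a hij _ _ (by ring)
    -- support contained
    have hsuppb : ∀ k, bb k ≠ 0 → a k ≠ 0 := by
      intro k hk
      by_cases h1 : k = i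
      · rw [h1]; exact ne_of_gt hiF.1
      by_cases h2 : k = j
      · rw [h2]; exact ne_of_gt hjF.1
      · rw [hbbo k h1 h2] at hk; exact hk
    have hsuppc : ∀ k, cc k ≠ 0 → a k ≠ 0 := by
      intro k hk
      by_cases h1 : k = i
      · rw [h1]; exact ne_of_gt hiF.1
      by_cases h2 : k = j
      · rw [h2]; exact ne_of_gt hjF.1
      · rw [hcco k h1 h2] at hk; exact hk
    -- fractional counts decrease
    have hfsubb : univ.filter (fun k => 0 < bb k ∧ bb k < β) ⊆
        univ.filter (fun k => 0 < a k ∧ a k < β) := by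
      intro k hk
      simp only [mem_filter, mem_univ, true_and] at hk ⊢
      by_cases h1 : k = i
      · rw [h1]; exact hiF
      by_cases h2 : k = j
      · rw [h2]; exact hjF
      · rwa [hbbo k h1 h2] at hk
    have hfsubc : univ.filter (fun k => 0 < cc k ∧ cc k < β) ⊆
        univ.filter (fun k => 0 < a k ∧ a k < β) := by
      intro k hk
      simp only [mem_filter, mem_univ, true_and] at hk ⊢
      by_cases h1 : k = i
      · rw [h1]; exact hiF
      by_cases h2 : k = j
      · rw [h2]; exact hjF
      · rwa [hcco k h1 h2] at hk
    have hwb : ∃ w, w ∈ univ.filter (fun k => 0 < a k ∧ a k < β) ∧ ¬(0 < bb w ∧ bb w < β) := by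
      rcases min_cases (a i) (β - a j) with ⟨h, _⟩ | ⟨h, _⟩
      · refine ⟨i, by simp [hiF], ?_⟩
        have : bb i = 0 := by rw [hbbi, hδ1, h]; ring
        rw [this]; simp
      · refine ⟨j, by simp [hjF], ?_⟩
        have : bb j = β := by rw [hbbj, hδ1, h]; ring
        rw [this]; simp
    have hwc : ∃ w, w ∈ univ.filter (fun k => 0 < a k ∧ a k < β) ∧ ¬(0 < cc w ∧ cc w < β) := by
      rcases min_cases (β - a i) (a j) with ⟨h, _⟩ | ⟨h, _⟩
      · refine ⟨i, by simp [hiF], ?_⟩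
        have : cc i = β := by rw [hcci, hδ2, h]; ring
        rw [this]; simp
      · refine ⟨j, by simp [hjF], ?_⟩
        have : cc j = 0 := by rw [hccj, hδ2, h]; ring
        rw [this]; simp
    have hfracb : (univ.filter (fun k => 0 < bb k ∧ bb k < β)).card ≤ n := by
      obtain ⟨w, hwmem, hwnot⟩ := hwb
      have hsubw : univ.filter (fun k => 0 < bb k ∧ bb k < β) ⊆
          (univ.filter (fun k => 0 < a k ∧ a k < β)).erase w := by
        intro k hk
        refine Finset.mem_erase.2 ⟨?_, hfsubb hk⟩
        rintro rfl
        exact hwnot (by simpa using (mem_filter.1 hk).2)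
      have h1 := card_le_card hsubw
      rw [Finset.card_erase_of_mem hwmem] at h1
      omega
    have hfracc : (univ.filter (fun k => 0 < cc k ∧ cc k < β)).card ≤ n := by
      obtain ⟨w, hwmem, hwnot⟩ := hwc
      have hsubw : univ.filter (fun k => 0 < cc k ∧ cc k < β) ⊆
          (univ.filter (fun k => 0 < a k ∧ a k < β)).erase w := by
        intro k hk
        refine Finset.mem_erase.2 ⟨?_, hfsubc hk⟩
        rintro rfl
        exact hwnot (by simpa using (mem_filter.1 hk).2)
      have h1 := card_le_card hsubw
      rw [Finset.card_erase_of_mem hwmem] at h1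
      omega
    -- memberships via IH
    have hbmem : bb ∈ convexHull ℝ (GoodSet M s β a) :=
      convexHull_mono (GoodSet_mono hsuppb hsumb)
        (IH bb hfracb hb0 hbβ (by rw [hsumb]; exact hsum))
    have hcmem : cc ∈ convexHull ℝ (GoodSet M s β a) :=
      convexHull_mono (GoodSet_mono hsuppc hsumc)
        (IH cc hfracc hc0 hcβ (by rw [hsumc]; exact hsum))
    -- the convex combination
    have hδne : δ1 + δ2 ≠ 0 := by positivity
    have hcombo : a = (δ2/(δ1+δ2)) • bb + (δ1/(δ1+δ2)) • cc := by
      funext k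
      simp only [Pi.add_apply, Pi.smul_apply, smul_eq_mul]
      by_cases h1 : k = i
      · rw [h1]; rw [hbbi, hcci]; field_simp; ring
      by_cases h2 : k = j
      · rw [h2]; rw [hbbj, hccj]; field_simp; ring
      · rw [hbbo k h1 h2, hcco k h1 h2]; field_simp; ring
    have hδpos : (0:ℝ) < δ1 + δ2 := by linarith
    have hfin := (convex_convexHull ℝ (GoodSet M s β a)) hbmem hcmem
      (le_of_lt (div_pos hδ2pos hδpos)) (le_of_lt (div_pos hδ1pos hδpos))
      (by rw [← add_div, add_comm δ2 δ1]; exact div_self hδne)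
    rwa [← hcombo] at hfin

theorem stmt_4 (N M s : ℕ) (hs : 0 < s) (b : Fin N → Fin M)
    (v : Fin N → ℝ) (β : ℝ) (hβ : 0 < β)
    (hinf : ∀ i : Fin M, blkNorm b v i ≤ β)
    (h1 : ∑ i : Fin M, blkNorm b v i ≤ s * β) :
    ∃ (J : ℕ) (lam : Fin J → ℝ) (u : Fin J → Fin N → ℝ),
      (∀ i, 0 ≤ lam i) ∧ (∑ i, lam i = 1) ∧
      v = ∑ i, lam i • u i ∧
      ∀ i : Fin J,
        blkSupp b (u i) ⊆ blkSupp b v ∧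
        (blkSupp b (u i)).card ≤ s ∧
        (∑ j : Fin M, blkNorm b (u i) j) = ∑ j : Fin M, blkNorm b v j ∧
        ∀ j : Fin M, blkNorm b (u i) j ≤ β := by
  classical
  set a : Fin M → ℝ := blkNorm b v with ha
  have h0a : ∀ i, 0 ≤ a i := fun i => Real.sqrt_nonneg _
  have hmem := scalar_decomp hs hβ (univ.filter (fun i => 0 < a i ∧ a i < β)).card a
    le_rfl h0a hinf h1
  rw [_root_.convexHull_eq] at hmem
  obtain ⟨ι, t, w, z, hw0, hw1, hz, hcm⟩ := hmem
  rw [Finset.centerMass_eq_of_sum_1 _ _ hw1] at hcm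
  set lift : (Fin M → ℝ) → (Fin N → ℝ) :=
    fun c j => if a (b j) = 0 then 0 else (c (b j) / a (b j)) * v j with hlift
  have hvz : ∀ j, a (b j) = 0 → v j = 0 := by
    intro j hz0
    exact (blkNorm_eq_zero_iff b v (b j)).1 hz0 j rfl
  have hlnorm : ∀ c : Fin M → ℝ, (∀ i, 0 ≤ c i) → (∀ i, c i ≠ 0 → a i ≠ 0) →
      ∀ i, blkNorm b (lift c) i = c i := by
    intro c hc0 hcs i
    by_cases hai : a i = 0
    · have hci : c i = 0 := by
        by_contra h; exact (hcs i h) hai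
      rw [hci]
      apply (blkNorm_eq_zero_iff b _ i).2
      intro j hj
      simp [hlift, hj, hai]
    · unfold blkNorm
      have hrw : ∀ j ∈ univ.filter (fun j => b j = i),
          (lift c) j ^ 2 = (c i / a i)^2 * v j ^ 2 := by
        intro j hj
        have hbj : b j = i := (mem_filter.1 hj).2
        simp only [hlift, hbj, if_neg hai]
        ring
      rw [Finset.sum_congr rfl hrw, ← Finset.mul_sum, Real.sqrt_mul (sq_nonneg _),
        Real.sqrt_sq_eq_abs]
      have hsq : Real.sqrt (∑ j ∈ univ.filter (fun j => b j = i), v j ^ 2) = a i := rfl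
      rw [hsq, abs_of_nonneg (div_nonneg (hc0 i) (h0a i)), div_mul_cancel₀ _ hai]
  set e : Fin t.card ≃ {x // x ∈ t} := t.equivFin.symm with he
  refine ⟨t.card, fun k => w (e k), fun k => lift (z (e k)), ?_, ?_, ?_, ?_⟩
  · exact fun k => hw0 _ (e k).2
  · rw [← hw1, ← Finset.sum_coe_sort t w]
    exact Fintype.sum_equiv e _ _ (fun k => rfl)
  · funext j
    rw [Finset.sum_apply]
    simp only [Pi.smul_apply, smul_eq_mul]
    have hre : ∑ k : Fin t.card, w (e k) * lift (z (e k)) j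
        = ∑ x ∈ t, w x * lift (z x) j := by
      rw [← Finset.sum_coe_sort t (fun x => w x * lift (z x) j)]
      exact Fintype.sum_equiv e _ _ (fun k => rfl)
    rw [hre]
    by_cases hai : a (b j) = 0
    · rw [hvz j hai]
      symm
      apply Finset.sum_eq_zero
      intro x hx
      simp [hlift, hai]
    · have hcoord : ∑ x ∈ t, w x * z x (b j) = a (b j) := by
        have := congrFun hcm (b j)
        rw [Finset.sum_apply] at this
        simpa using this
      calc v j = (∑ x ∈ t, w x * z x (b j)) / a (b j) * v j := by
            rw [hcoord, div_self hai, one_mul]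
        _ = ∑ x ∈ t, w x * lift (z x) j := by
            rw [Finset.sum_div, Finset.sum_mul]
            apply Finset.sum_congr rfl
            intro x hx
            simp only [hlift, if_neg hai]
            ring
  · intro k
    obtain ⟨hc0, hcβ, hcs, hccard, hcsum⟩ := hz _ (e k).2
    have hn := hlnorm (z (e k)) hc0 hcs
    refine ⟨?_, ?_, ?_, ?_⟩
    · intro i hi
      rw [mem_blkSupp_iff] at hi ⊢
      rw [hn i] at hi
      exact hcs i hi
    · have hsubc : blkSupp b (lift (z (e k))) ⊆ univ.filter (fun i => z (e k) i ≠ 0) := by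
        intro i hi
        rw [mem_blkSupp_iff, hn i] at hi
        simp [hi]
      exact le_trans (card_le_card hsubc) hccard
    · calc ∑ i, blkNorm b (lift (z (e k))) i = ∑ i, z (e k) i :=
            Finset.sum_congr rfl (fun i _ => hn i)
        _ = ∑ i, a i := hcsum
    · intro i
      rw [hn i]
      exact hcβ i
end

section
/- Let ω_1 ≥ ω_2 ≥ ... ≥ ω_L be weights in [0,1], let ρ_i ≥ 0 with ∑_{i=1}^L ρ_i = ρ, and let α ∈ [0,1]. Define Υ(ω) = ω + (1−ω)√(1 + ρ − 2αρ) for a single weight ω, and Υ_L = ω_L + (1−ω_1)√(1 + ∑_{i=1}^L ρ_i − 2α∑_{i=1}^L ρ_i) + ∑_{i=2}^L (ω_{i−1} − ω_i)√(1 + ∑_{j=i}^L ρ_j − 2α∑_{j=i}^L ρ_j). Then Υ(ω_L) ≤ Υ_L ≤ Υ(ω_1) holds for all such choices if and only if α ≥ 1/2. -/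
/-- Single-weight quantity `Υ(ω) = ω + (1−ω)√(1 + ρ − 2αρ)`. -/
noncomputable def UpsSingle (ω ρ α : ℝ) : ℝ :=
  ω + (1 - ω) * Real.sqrt (1 + ρ - 2 * α * ρ)

/-- Multi-weight quantity `Υ_L` with a common accuracy `α`, weights `ω 1 ≥ … ≥ ω L`
and sizes `ρ 1, …, ρ L`. -/
noncomputable def UpsMulti (L : ℕ) (ω ρ : ℕ → ℝ) (α : ℝ) : ℝ :=
  ω L + (1 - ω 1) *
      Real.sqrt (1 + (∑ i ∈ Finset.Icc 1 L, ρ i) - 2 * α * ∑ i ∈ Finset.Icc 1 L, ρ i) +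
    ∑ i ∈ Finset.Icc 2 L, (ω (i - 1) - ω i) *
      Real.sqrt (1 + (∑ j ∈ Finset.Icc i L, ρ j) - 2 * α * ∑ j ∈ Finset.Icc i L, ρ j)

private lemma telescope (ω : ℕ → ℝ) (L : ℕ) (hL : 1 ≤ L) :
    ∑ i ∈ Finset.Icc 2 L, (ω (i - 1) - ω i) = ω 1 - ω L := by
  rw [← Finset.Ico_add_one_right_eq_Icc, Finset.sum_Ico_eq_sum_range]
  have : ∀ i, ω (2 + i - 1) - ω (2 + i) = (fun k => ω (k+1)) i - (fun k => ω (k+1)) (i+1) := by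
    intro i; simp only []; congr 2 <;> omega
  simp only [this]
  rw [Finset.sum_range_sub' (fun k => ω (k+1))]
  congr 2; omega

theorem stmt_7 (α : ℝ) (hα0 : 0 ≤ α) (hα1 : α ≤ 1) :
    (∀ (L : ℕ), 0 < L → ∀ ω ρ : ℕ → ℝ,
        (∀ i ∈ Finset.Icc 1 L, 0 ≤ ω i ∧ ω i ≤ 1) →
        (∀ i j : ℕ, 1 ≤ i → i ≤ j → j ≤ L → ω j ≤ ω i) →
        (∀ i ∈ Finset.Icc 1 L, 0 ≤ ρ i) →
        UpsSingle (ω L) (∑ i ∈ Finset.Icc 1 L, ρ i) α ≤ UpsMulti L ω ρ α ∧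
          UpsMulti L ω ρ α ≤ UpsSingle (ω 1) (∑ i ∈ Finset.Icc 1 L, ρ i) α)
      ↔ 1 / 2 ≤ α := by
  constructor
  · intro h
    have h2 := (h 2 (by norm_num) (fun n => if n ≤ 1 then 1 else 0)
      (fun n => if n = 2 then 1 else 0)
      (by intro i hi; split <;> norm_num)
      (by intro i j hi hij hj; split <;> split <;> norm_num <;> omega)
      (by intro i hi; split <;> norm_num)).2
    have e1 : Finset.Icc 1 2 = ({1, 2} : Finset ℕ) := by decide
    have e2 : Finset.Icc 2 2 = ({2} : Finset ℕ) := by decide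
    simp only [UpsSingle, UpsMulti, e1, e2, Finset.sum_insert (by decide : (1:ℕ) ∉ ({2} : Finset ℕ)),
      Finset.sum_singleton] at h2
    norm_num at h2
    linarith
  · intro hα L hL ω ρ hω hmono hρ
    set S : ℕ → ℝ := fun i => ∑ j ∈ Finset.Icc i L, ρ j with hS
    have hS0 : ∀ i, 1 ≤ i → 0 ≤ S i := by
      intro i hi
      apply Finset.sum_nonneg
      intro j hj
      simp only [Finset.mem_Icc] at hj
      exact hρ j (Finset.mem_Icc.2 ⟨le_trans hi hj.1, hj.2⟩)
    have hSle : ∀ i, 1 ≤ i → S i ≤ S 1 := by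
      intro i hi
      apply Finset.sum_le_sum_of_subset_of_nonneg
      · apply Finset.Icc_subset_Icc_left hi
      · intro j hj _
        simp only [Finset.mem_Icc] at hj
        exact hρ j (Finset.mem_Icc.2 hj)
    set f : ℝ → ℝ := fun s => Real.sqrt (1 + s - 2 * α * s) with hf
    have hfle1 : ∀ s, 0 ≤ s → f s ≤ 1 := by
      intro s hs
      rw [hf]; simp only []
      rw [Real.sqrt_le_one]
      nlinarith
    have hfanti : ∀ i, 1 ≤ i → f (S 1) ≤ f (S i) := by
      intro i hi
      apply Real.sqrt_le_sqrt
      have := hSle i hi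
      nlinarith
    have hω1 : ω 1 ≤ 1 := (hω 1 (Finset.mem_Icc.2 ⟨le_refl 1, hL⟩)).2
    have hterm : ∀ i ∈ Finset.Icc 2 L, 0 ≤ ω (i - 1) - ω i := by
      intro i hi
      simp only [Finset.mem_Icc] at hi
      have := hmono (i - 1) i (by omega) (by omega) hi.2
      linarith
    have htel := telescope ω L hL
    have hfS1nn : 0 ≤ f (S 1) := Real.sqrt_nonneg _
    constructor
    · -- lower bound
      have key : UpsSingle (ω L) (S 1) α
          = ω L + (1 - ω 1) * f (S 1) + ∑ i ∈ Finset.Icc 2 L, (ω (i-1) - ω i) * f (S 1) := by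
        rw [← Finset.sum_mul, htel, UpsSingle]
        ring
      show UpsSingle (ω L) (S 1) α ≤ _
      rw [key, UpsMulti]
      gcongr with i hi
      · exact hterm i hi
      · simp only [Finset.mem_Icc] at hi
        exact hfanti i (by omega)
    · -- upper bound
      have key : UpsSingle (ω 1) (S 1) α
          = ω L + (1 - ω 1) * f (S 1) + ∑ i ∈ Finset.Icc 2 L, (ω (i-1) - ω i) * 1 := by
        simp only [mul_one]
        rw [htel, UpsSingle]
        ring
      show UpsMulti L ω ρ α ≤ UpsSingle (ω 1) (S 1) α
      rw [key, UpsMulti]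
      gcongr with i hi
      · exact hterm i hi
      · simp only [Finset.mem_Icc] at hi
        exact hfle1 (S i) (hS0 i (by omega))
end

section
/- For t > d > 0 and Υ > 0, the function δ(t, Υ) = √((t−d)/(t−d+Υ²)) is strictly decreasing in Υ. Consequently, with common accuracy α, weights ω_1 ≥ ... ≥ ω_L in [0,1] and Υ_L, Υ(ω) defined as in the weighted block RIP analysis, δ(t, Υ(ω_1)) ≤ δ(t, Υ_L) ≤ δ(t, Υ(ω_L)) if and only if α ≥ 1/2. -/
/-- The block RIP threshold `δ(t, Υ) = √((t−d)/(t−d+Υ²))`. -/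
noncomputable def deltaThr (t d Υ : ℝ) : ℝ :=
  Real.sqrt ((t - d) / (t - d + Υ ^ 2))

lemma deltaThr_strict_anti (t d : ℝ) (htd : d < t) :
    ∀ Υ₁ Υ₂ : ℝ, 0 < Υ₁ → Υ₁ < Υ₂ → deltaThr t d Υ₂ < deltaThr t d Υ₁ := by
  intro a b ha hab
  unfold deltaThr
  have h1 : (0:ℝ) < t - d := by linarith
  have h2 : a ^ 2 < b ^ 2 := by nlinarith
  apply Real.sqrt_lt_sqrt
  · positivity
  · apply div_lt_div_of_pos_left h1 (by positivity)
    linarith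

lemma deltaThr_anti (t d : ℝ) (htd : d < t) {a b : ℝ} (ha : 0 ≤ a) (hab : a ≤ b) :
    deltaThr t d b ≤ deltaThr t d a := by
  unfold deltaThr
  have h1 : (0:ℝ) < t - d := by linarith
  have h2 : a ^ 2 ≤ b ^ 2 := by nlinarith
  apply Real.sqrt_le_sqrt
  apply div_le_div_of_nonneg_left h1.le (by positivity)
  linarith

lemma tele (ω : ℕ → ℝ) : ∀ L : ℕ, 1 ≤ L →
    ∑ i ∈ Finset.Icc 2 L, (ω (i - 1) - ω i) = ω 1 - ω L := by
  intro L
  induction L with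
  | zero => omega
  | succ n ih =>
    intro _
    rcases Nat.lt_or_ge n 1 with h | h
    · interval_cases n
      simp
    · rw [Finset.sum_Icc_succ_top (by omega : 2 ≤ n + 1), ih h]
      simp

theorem stmt_8 (t d : ℝ) (hd : 0 < d) (htd : d < t)
    (α : ℝ) (hα0 : 0 ≤ α) (hα1 : α ≤ 1) :
    (∀ Υ₁ Υ₂ : ℝ, 0 < Υ₁ → Υ₁ < Υ₂ → deltaThr t d Υ₂ < deltaThr t d Υ₁) ∧
      ((∀ (L : ℕ), 0 < L → ∀ ω ρ : ℕ → ℝ,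
          (∀ i ∈ Finset.Icc 1 L, 0 ≤ ω i ∧ ω i ≤ 1) →
          (∀ i j : ℕ, 1 ≤ i → i ≤ j → j ≤ L → ω j ≤ ω i) →
          (∀ i ∈ Finset.Icc 1 L, 0 ≤ ρ i) →
          deltaThr t d (UpsSingle (ω 1) (∑ i ∈ Finset.Icc 1 L, ρ i) α) ≤
              deltaThr t d (UpsMulti L ω ρ α) ∧
            deltaThr t d (UpsMulti L ω ρ α) ≤
              deltaThr t d (UpsSingle (ω L) (∑ i ∈ Finset.Icc 1 L, ρ i) α))
        ↔ 1 / 2 ≤ α) := by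
  refine ⟨deltaThr_strict_anti t d htd, ?_, ?_⟩
  · -- forward: statement implies α ≥ 1/2
    intro H
    by_contra hlt
    push_neg at hlt
    set ω : ℕ → ℝ := fun i => if i = 1 then 1 else 0 with hω
    set ρ : ℕ → ℝ := fun i => if i = 2 then 1 else 0 with hρ
    have h12 : Finset.Icc 1 2 = ({1, 2} : Finset ℕ) := by decide
    have h22 : Finset.Icc 2 2 = ({2} : Finset ℕ) := by decide
    have hS : (∑ i ∈ Finset.Icc 1 2, ρ i) = 1 := by
      rw [h12]; simp [hρ]
    have key := H 2 (by norm_num) ω ρ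
      (by intro i hi; rw [h12] at hi; fin_cases hi <;> simp [hω])
      (by intro i j h1 h2 h3
          simp only [hω]
          split_ifs <;> norm_num
          omega)
      (by intro i hi; rw [h12] at hi; fin_cases hi <;> simp [hρ])
    rw [hS] at key
    have hω1 : ω 1 = 1 := by simp [hω]
    have hω2 : ω 2 = 0 := by simp [hω]
    have hUS : UpsSingle (ω 1) 1 α = 1 := by
      rw [hω1]; simp [UpsSingle]
    have hUM : UpsMulti 2 ω ρ α = Real.sqrt (2 - 2 * α) := by
      unfold UpsMulti
      rw [h22, hS, Finset.sum_singleton]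
      simp [hω, hρ]
      congr 1
      ring
    rw [hUS, hUM] at key
    have hgt : (1:ℝ) < Real.sqrt (2 - 2 * α) := by
      rw [show (1:ℝ) = Real.sqrt 1 by simp]
      apply Real.sqrt_lt_sqrt (by norm_num)
      linarith
    have := deltaThr_strict_anti t d htd 1 (Real.sqrt (2 - 2*α)) one_pos hgt
    linarith [key.1]
  · -- backward
    intro hα L hL ω ρ hω hmono hρ
    have hL1 : 1 ≤ L := hL
    have hmemL : L ∈ Finset.Icc 1 L := Finset.mem_Icc.mpr ⟨hL1, le_refl L⟩
    have hmem1 : 1 ∈ Finset.Icc 1 L := Finset.mem_Icc.mpr ⟨le_refl 1, hL1⟩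
    set s : ℝ := ∑ i ∈ Finset.Icc 1 L, ρ i with hsdef
    have hsnonneg : 0 ≤ s := Finset.sum_nonneg (fun i hi => hρ i hi)
    -- partial sums
    have hTnonneg : ∀ i : ℕ, 2 ≤ i → (0:ℝ) ≤ ∑ j ∈ Finset.Icc i L, ρ j := by
      intro i hi
      apply Finset.sum_nonneg
      intro j hj
      obtain ⟨h1, h2⟩ := Finset.mem_Icc.mp hj
      exact hρ j (Finset.mem_Icc.mpr ⟨by omega, h2⟩)
    have hTle : ∀ i : ℕ, 2 ≤ i → (∑ j ∈ Finset.Icc i L, ρ j) ≤ s := by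
      intro i hi
      apply Finset.sum_le_sum_of_subset_of_nonneg
      · exact Finset.Icc_subset_Icc_left (by omega)
      · intro j hj _
        exact hρ j hj
    have hdiff : ∀ i ∈ Finset.Icc 2 L, 0 ≤ ω (i - 1) - ω i := by
      intro i hi
      obtain ⟨h2, hL'⟩ := Finset.mem_Icc.mp hi
      exact sub_nonneg.mpr (hmono (i - 1) i (by omega) (by omega) hL')
    set X : ℝ := 1 + s - 2 * α * s with hXdef
    have hsqX : Real.sqrt X ≤ 1 := Real.sqrt_le_one.mpr (by nlinarith)
    -- inequality A : UpsMulti ≤ UpsSingle (ω 1)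
    have hA : UpsMulti L ω ρ α ≤ UpsSingle (ω 1) s α := by
      have hsum : ∑ i ∈ Finset.Icc 2 L, (ω (i - 1) - ω i) *
          Real.sqrt (1 + (∑ j ∈ Finset.Icc i L, ρ j) - 2 * α * ∑ j ∈ Finset.Icc i L, ρ j)
          ≤ ∑ i ∈ Finset.Icc 2 L, (ω (i - 1) - ω i) := by
        apply Finset.sum_le_sum
        intro i hi
        obtain ⟨h2, hL'⟩ := Finset.mem_Icc.mp hi
        have hT := hTnonneg i h2
        have hs1 : Real.sqrt (1 + (∑ j ∈ Finset.Icc i L, ρ j)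
            - 2 * α * ∑ j ∈ Finset.Icc i L, ρ j) ≤ 1 :=
          Real.sqrt_le_one.mpr (by nlinarith)
        nlinarith [hdiff i hi]
      rw [tele ω L hL1] at hsum
      unfold UpsMulti UpsSingle
      rw [← hsdef, ← hXdef]
      linarith
    -- inequality B : UpsSingle (ω L) ≤ UpsMulti
    have hB : UpsSingle (ω L) s α ≤ UpsMulti L ω ρ α := by
      have hsum : ∑ i ∈ Finset.Icc 2 L, (ω (i - 1) - ω i) * Real.sqrt X
          ≤ ∑ i ∈ Finset.Icc 2 L, (ω (i - 1) - ω i) *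
          Real.sqrt (1 + (∑ j ∈ Finset.Icc i L, ρ j) - 2 * α * ∑ j ∈ Finset.Icc i L, ρ j) := by
        apply Finset.sum_le_sum
        intro i hi
        obtain ⟨h2, hL'⟩ := Finset.mem_Icc.mp hi
        have hT := hTle i h2
        have hmono' : Real.sqrt X ≤ Real.sqrt (1 + (∑ j ∈ Finset.Icc i L, ρ j)
            - 2 * α * ∑ j ∈ Finset.Icc i L, ρ j) := by
          apply Real.sqrt_le_sqrt
          nlinarith
        exact mul_le_mul_of_nonneg_left hmono' (hdiff i hi)
      have heq : ∑ i ∈ Finset.Icc 2 L, (ω (i - 1) - ω i) * Real.sqrt X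
          = (ω 1 - ω L) * Real.sqrt X := by
        rw [← Finset.sum_mul, tele ω L hL1]
      rw [heq] at hsum
      unfold UpsMulti UpsSingle
      rw [← hsdef, ← hXdef]
      have hexpand : (1 - ω L) * Real.sqrt X
          = (1 - ω 1) * Real.sqrt X + (ω 1 - ω L) * Real.sqrt X := by ring
      linarith
    -- nonnegativity
    have hBnn : 0 ≤ UpsSingle (ω L) s α := by
      obtain ⟨h0, h1⟩ := hω L hmemL
      unfold UpsSingle
      rw [← hXdef]
      nlinarith [Real.sqrt_nonneg X]
    have hMnn : 0 ≤ UpsMulti L ω ρ α := le_trans hBnn hB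
    exact ⟨deltaThr_anti t d htd hMnn hA, deltaThr_anti t d htd hBnn hB⟩
end

section
/- Let h ∈ ℝ^N be a block vector over 𝓘, let h_max be h restricted to its dk largest blocks (in block ℓ2 norm) and h_rest = h − h_max. If ‖h_rest‖_{2,1} ≤ ‖h_max‖_{2,1} + λ for some λ ≥ 0, then ‖h_rest‖_2 ≤ ‖h_max‖_2 + λ/√(dk). -/
set_option maxHeartbeats 1600000 in
theorem stmt_15 (N M dk : ℕ) (hdk : 0 < dk) (b : Fin N → Fin M)
    (h : Fin N → ℝ) (S : Finset (Fin M)) (hcard : S.card = dk)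
    (hlargest : ∀ i ∈ S, ∀ j ∈ Sᶜ, blkNorm b h j ≤ blkNorm b h i)
    (hmax hrest : Fin N → ℝ)
    (hmaxdef : hmax = fun j => if b j ∈ S then h j else 0)
    (hrestdef : hrest = h - hmax)
    (lam : ℝ) (hlam : 0 ≤ lam)
    (h21 : ∑ i : Fin M, blkNorm b hrest i ≤ (∑ i : Fin M, blkNorm b hmax i) + lam) :
    Real.sqrt (∑ j : Fin N, hrest j ^ 2) ≤
      Real.sqrt (∑ j : Fin N, hmax j ^ 2) + lam / Real.sqrt dk := by
  have hdk' : (0:ℝ) < dk := by exact_mod_cast hdk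
  set D := Real.sqrt dk with hD
  have hDpos : 0 < D := Real.sqrt_pos.2 hdk'
  have hDsq : D ^ 2 = dk := Real.sq_sqrt hdk'.le
  have hblk_nonneg : ∀ (v : Fin N → ℝ) i, 0 ≤ blkNorm b v i := fun v i => Real.sqrt_nonneg _
  have hblk_sq : ∀ (v : Fin N → ℝ) i,
      (blkNorm b v i) ^ 2 = ∑ j ∈ Finset.univ.filter (fun j => b j = i), v j ^ 2 :=
    fun v i => Real.sq_sqrt (Finset.sum_nonneg fun j _ => sq_nonneg _)
  have hrestblk : ∀ i, blkNorm b hrest i = if i ∈ S then 0 else blkNorm b h i := by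
    intro i
    by_cases hi : i ∈ S
    · simp only [hi, if_pos]
      unfold blkNorm
      rw [Finset.sum_eq_zero, Real.sqrt_zero]
      intro j hj
      simp only [Finset.mem_filter] at hj
      simp [hrestdef, hmaxdef, hj.2, hi]
    · simp only [hi, if_neg, if_false]
      unfold blkNorm
      congr 1
      refine Finset.sum_congr rfl fun j hj => ?_
      simp only [Finset.mem_filter] at hj
      have : b j ∉ S := by rw [hj.2]; exact hi
      simp [hrestdef, hmaxdef, this]
  have hmaxblk : ∀ i, blkNorm b hmax i = if i ∈ S then blkNorm b h i else 0 := by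
    intro i
    by_cases hi : i ∈ S
    · simp only [hi, if_pos]
      unfold blkNorm
      congr 1
      refine Finset.sum_congr rfl fun j hj => ?_
      simp only [Finset.mem_filter] at hj
      have : b j ∈ S := hj.2 ▸ hi
      simp [hmaxdef, this]
    · simp only [hi, if_neg, if_false]
      unfold blkNorm
      rw [Finset.sum_eq_zero, Real.sqrt_zero]
      intro j hj
      simp only [Finset.mem_filter] at hj
      have : b j ∉ S := by rw [hj.2]; exact hi
      simp [hmaxdef, this]
  have hfib : ∀ (v : Fin N → ℝ),
      ∑ j : Fin N, v j ^ 2 = ∑ i : Fin M, (blkNorm b v i) ^ 2 := by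
    intro v
    rw [Finset.sum_congr rfl fun i _ => hblk_sq v i]
    exact (Finset.sum_fiberwise _ _ _).symm
  have hSne : S.Nonempty := Finset.card_pos.mp (by rw [hcard]; exact hdk)
  obtain ⟨i0, hi0S, hi0min⟩ := S.exists_min_image (blkNorm b h) hSne
  set α := blkNorm b h i0 with hα
  have hαnn : 0 ≤ α := hblk_nonneg h i0
  set E := ∑ i ∈ S, (blkNorm b h i) ^ 2 with hE
  set B := Real.sqrt E with hB
  have hEnn : 0 ≤ E := Finset.sum_nonneg fun i _ => sq_nonneg _
  have hBnn : 0 ≤ B := Real.sqrt_nonneg _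
  have hBsq : B ^ 2 = E := Real.sq_sqrt hEnn
  have hmaxsum : ∑ j : Fin N, hmax j ^ 2 = E := by
    rw [hfib]
    have e : ∀ i, (blkNorm b hmax i) ^ 2 = if i ∈ S then (blkNorm b h i) ^ 2 else 0 := by
      intro i; rw [hmaxblk]; split <;> simp
    rw [Finset.sum_congr rfl fun i _ => e i, Finset.sum_ite_mem, Finset.univ_inter]
  have hrestsum : ∑ j : Fin N, hrest j ^ 2 = ∑ i ∈ Sᶜ, (blkNorm b h i) ^ 2 := by
    rw [hfib]
    have e : ∀ i, (blkNorm b hrest i) ^ 2 = if i ∈ Sᶜ then (blkNorm b h i) ^ 2 else 0 := by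
      intro i; rw [hrestblk]
      by_cases hi : i ∈ S <;> simp [hi]
    rw [Finset.sum_congr rfl fun i _ => e i, Finset.sum_ite_mem, Finset.univ_inter]
  set T := ∑ i ∈ Sᶜ, (blkNorm b h i) ^ 2 with hT
  have hrest_le : ∀ i ∈ Sᶜ, blkNorm b h i ≤ α := fun i hi => hlargest i0 hi0S i hi
  have hii : T ≤ α * ∑ i ∈ Sᶜ, blkNorm b h i := by
    rw [Finset.mul_sum]
    refine Finset.sum_le_sum fun i hi => ?_
    have := hrest_le i hi
    nlinarith [hblk_nonneg h i]
  have h21' : ∑ i ∈ Sᶜ, blkNorm b h i ≤ (∑ i ∈ S, blkNorm b h i) + lam := by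
    have e1 : ∑ i : Fin M, blkNorm b hrest i = ∑ i ∈ Sᶜ, blkNorm b h i := by
      have e : ∀ i, blkNorm b hrest i = if i ∈ Sᶜ then blkNorm b h i else 0 := by
        intro i; rw [hrestblk]; by_cases hi : i ∈ S <;> simp [hi]
      rw [Finset.sum_congr rfl fun i _ => e i, Finset.sum_ite_mem, Finset.univ_inter]
    have e2 : ∑ i : Fin M, blkNorm b hmax i = ∑ i ∈ S, blkNorm b h i := by
      rw [Finset.sum_congr rfl fun i _ => hmaxblk i, Finset.sum_ite_mem, Finset.univ_inter]
    rw [e1, e2] at h21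
    exact h21
  have hiv : ∑ i ∈ S, blkNorm b h i ≤ D * B := by
    have h1 : (∑ i ∈ S, blkNorm b h i) ^ 2 ≤ dk * E := by
      have := sq_sum_le_card_mul_sum_sq (s := S) (f := blkNorm b h)
      rw [hcard] at this
      exact_mod_cast this
    have h2 : (∑ i ∈ S, blkNorm b h i) ^ 2 ≤ (D * B) ^ 2 := by
      rw [mul_pow, hDsq, hBsq]; exact h1
    have hsnn : 0 ≤ ∑ i ∈ S, blkNorm b h i :=
      Finset.sum_nonneg fun i _ => hblk_nonneg h i
    have := Real.sqrt_le_sqrt h2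
    rwa [Real.sqrt_sq hsnn, Real.sqrt_sq (mul_nonneg hDpos.le hBnn)] at this
  have hv : D * α ≤ B := by
    have h1 : (dk:ℝ) * α ^ 2 ≤ E := by
      have : (dk:ℝ) * α ^ 2 = ∑ _i ∈ S, α ^ 2 := by
        rw [Finset.sum_const, hcard, nsmul_eq_mul]
      rw [this]
      exact Finset.sum_le_sum fun i hi => by nlinarith [hi0min i hi, hblk_nonneg h i]
    have h2 : (D * α) ^ 2 ≤ B ^ 2 := by rw [mul_pow, hDsq, hBsq]; exact h1
    have := Real.sqrt_le_sqrt h2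
    rwa [Real.sqrt_sq (mul_nonneg hDpos.le hαnn), Real.sqrt_sq hBnn] at this
  have hfin : T ≤ α * (D * B + lam) := by
    refine hii.trans (mul_le_mul_of_nonneg_left ?_ hαnn)
    linarith
  rw [hrestsum, hmaxsum, ← hB]
  set μ := lam / D with hμdef
  have hμnn : 0 ≤ μ := div_nonneg hlam hDpos.le
  have hμ : D * μ = lam := mul_div_cancel₀ lam hDpos.ne'
  have hkey : T ≤ (B + μ) ^ 2 := by
    nlinarith [mul_le_mul_of_nonneg_right hv (add_nonneg hBnn hμnn), sq_nonneg μ,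
      mul_nonneg hBnn hμnn, hαnn, hDpos.le]
  have := Real.sqrt_le_sqrt hkey
  rwa [Real.sqrt_sq (add_nonneg hBnn hμnn)] at this
end
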